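/- With y(x) = √(cosh(2x)), the quantities (y·log y)/(y − 1) and x/tanh(x) cannot be compared on (0, ∞): there exists x > 0 with (y(x)·log y(x))/(y(x) − 1) > x/tanh(x) (e.g. x = 2), and there exists x > 0 with (y(x)·log y(x))/(y(x) − 1) < x/tanh(x) (e.g. x = 3/2); consequently the means I(a,b) and I(Q(a,b), G(a,b)) cannot be compared. -/
import Mathlib

noncomputable def G (a b : ℝ) : ℝ := Real.sqrt (a * b)
noncomputable def Q (a b : ℝ) : ℝ := Real.sqrt ((a ^ 2 + b ^ 2) / 2)
noncomputable def I (a b : ℝ) : ℝ := (1 / Real.exp 1) * (a ^ a / b ^ b) ^ (1 / (a - b))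

noncomputable def y (x : ℝ) : ℝ := Real.sqrt (Real.cosh (2 * x))

open Real

lemma he3 : (20.0855369:ℝ) < Real.exp 3 ∧ Real.exp 3 < 20.0855370 := by
  have h : Real.exp 3 = Real.exp 1 ^ 3 := (Real.exp_one_pow 3).symm
  constructor
  · calc (20.0855369:ℝ) < 2.7182818283 ^ 3 := by norm_num
      _ < Real.exp 1 ^ 3 := by gcongr <;> first | positivity | linarith [Real.exp_one_gt_d9]
      _ = Real.exp 3 := h.symm
  · calc Real.exp 3 = Real.exp 1 ^ 3 := h
      _ < 2.7182818286 ^ 3 := by gcongr <;> first | positivity | linarith [Real.exp_one_lt_d9]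
      _ < 20.0855370 := by norm_num

lemma he4 : (54.5981500:ℝ) < Real.exp 4 ∧ Real.exp 4 < 54.59815005 := by
  have h : Real.exp 4 = Real.exp 1 ^ 4 := (Real.exp_one_pow 4).symm
  constructor
  · calc (54.5981500:ℝ) < 2.7182818283 ^ 4 := by norm_num
      _ < Real.exp 1 ^ 4 := by gcongr <;> first | positivity | linarith [Real.exp_one_gt_d9]
      _ = Real.exp 4 := h.symm
  · calc Real.exp 4 = Real.exp 1 ^ 4 := h
      _ < 2.7182818286 ^ 4 := by gcongr <;> first | positivity | linarith [Real.exp_one_lt_d9]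
      _ < 54.59815005 := by norm_num

lemma he15 : (4.4816890:ℝ) < Real.exp 1.5 ∧ Real.exp 1.5 < 4.4816891 := by
  have h : Real.exp 1.5 * Real.exp 1.5 = Real.exp 3 := by
    rw [← Real.exp_add]; norm_num
  have h3 := he3
  have hp := Real.exp_pos (1.5:ℝ)
  constructor <;> nlinarith [h3.1, h3.2]

lemma he2 : (7.3890560:ℝ) < Real.exp 2 ∧ Real.exp 2 < 7.38905611 := by
  have h : Real.exp 2 * Real.exp 2 = Real.exp 4 := by
    rw [← Real.exp_add]; norm_num
  have h4 := he4
  have hp := Real.exp_pos (2:ℝ)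
  constructor <;> nlinarith [h4.1, h4.2]

lemma hc3 : (10.0676619:ℝ) < Real.cosh 3 ∧ Real.cosh 3 < 10.0676621 := by
  have h3 := he3
  have hp := Real.exp_pos (3:ℝ)
  have hinv : Real.exp 3 * (Real.exp 3)⁻¹ = 1 := mul_inv_cancel₀ (ne_of_gt hp)
  have hiv : (0.0497870:ℝ) < (Real.exp 3)⁻¹ ∧ ((Real.exp 3)⁻¹:ℝ) < 0.0497871 := by
    have hq : 0 < (Real.exp 3)⁻¹ := by positivity
    constructor <;> nlinarith [h3.1, h3.2]
  rw [Real.cosh_eq, Real.exp_neg]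
  constructor <;> nlinarith [hiv.1, hiv.2, h3.1, h3.2]

lemma hc4 : (27.3082327:ℝ) < Real.cosh 4 ∧ Real.cosh 4 < 27.3082329 := by
  have h4 := he4
  have hp := Real.exp_pos (4:ℝ)
  have hinv : Real.exp 4 * (Real.exp 4)⁻¹ = 1 := mul_inv_cancel₀ (ne_of_gt hp)
  have hiv : (0.0183156:ℝ) < (Real.exp 4)⁻¹ ∧ ((Real.exp 4)⁻¹:ℝ) < 0.0183157 := by
    have hq : 0 < (Real.exp 4)⁻¹ := by positivity
    constructor <;> nlinarith [h4.1, h4.2]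
  rw [Real.cosh_eq, Real.exp_neg]
  constructor <;> nlinarith [hiv.1, hiv.2, h4.1, h4.2]

lemma hL3 : (30:ℝ)/13 < Real.log (Real.cosh 3) := by
  have hcp : (0:ℝ) < Real.cosh 3 := Real.cosh_pos _
  rw [Real.lt_log_iff_exp_lt hcp]
  apply lt_of_pow_lt_pow_left₀ 13 hcp.le
  have h1 : Real.exp ((30:ℝ)/13) ^ 13 = Real.exp 1 ^ 30 := by
    rw [← Real.exp_nat_mul, ← Real.exp_nat_mul]; norm_num
  rw [h1]
  calc Real.exp 1 ^ 30 < 2.7183 ^ 30 := by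
        gcongr <;> first | positivity | nlinarith [Real.exp_one_lt_d9]
    _ < 10.0676619 ^ 13 := by norm_num
    _ < Real.cosh 3 ^ 13 := by gcongr <;> linarith [hc3.1, Real.cosh_pos (3:ℝ)]

lemma hL4 : Real.log (Real.cosh 4) < 83/25 := by
  have hcp : (0:ℝ) < Real.cosh 4 := Real.cosh_pos _
  rw [Real.log_lt_iff_lt_exp hcp]
  apply lt_of_pow_lt_pow_left₀ 25 (Real.exp_pos _).le
  have h1 : Real.exp ((83:ℝ)/25) ^ 25 = Real.exp 1 ^ 83 := by
    rw [← Real.exp_nat_mul, ← Real.exp_nat_mul]; norm_num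
  rw [h1]
  calc Real.cosh 4 ^ 25 < 27.3082329 ^ 25 := by gcongr <;> first | positivity | linarith [hc4.2]
    _ < 2.718 ^ 83 := by norm_num
    _ < Real.exp 1 ^ 83 := by
        gcongr <;> nlinarith [Real.exp_one_gt_d9]

lemma key15 : y 1.5 * Real.log (y 1.5) / (y 1.5 - 1) > 1.5 / Real.tanh 1.5 := by
  have hcp : (0:ℝ) < Real.cosh 3 := Real.cosh_pos _
  have hy_def : y 1.5 = Real.sqrt (Real.cosh 3) := by
    unfold y; norm_num
  have hyu : y 1.5 < 3.17296 := by
    rw [hy_def, Real.sqrt_lt' (by norm_num)]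
    nlinarith [hc3.2]
  have hyl : (1:ℝ) < y 1.5 := by
    rw [hy_def]
    exact (Real.lt_sqrt (by norm_num)).2 (by nlinarith [hc3.1])
  have hlog : Real.log (y 1.5) = Real.log (Real.cosh 3) / 2 := by
    rw [hy_def, Real.log_sqrt hcp.le]
  have hL := hL3
  have hLHS : (1.679:ℝ) < y 1.5 * Real.log (y 1.5) / (y 1.5 - 1) := by
    rw [hlog, lt_div_iff₀ (by linarith)]
    nlinarith [mul_nonneg (by linarith : (0:ℝ) ≤ 3.17296 - y 1.5)
      (by linarith : (0:ℝ) ≤ Real.log (Real.cosh 3) - 30/13)]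
  have he := he15
  have hp := Real.exp_pos (1.5:ℝ)
  have hinv : Real.exp 1.5 * (Real.exp 1.5)⁻¹ = 1 := mul_inv_cancel₀ (ne_of_gt hp)
  have hiv : (0.2231301:ℝ) < (Real.exp 1.5)⁻¹ ∧ ((Real.exp 1.5)⁻¹:ℝ) < 0.2231302 := by
    have hq : 0 < (Real.exp 1.5)⁻¹ := by positivity
    constructor <;> nlinarith [he.1, he.2]
  have hsp : (0:ℝ) < Real.sinh 1.5 := Real.sinh_pos_iff.2 (by norm_num)
  have hRHS : (1.5:ℝ) / Real.tanh 1.5 < 1.679 := by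
    rw [Real.tanh_eq_sinh_div_cosh, div_div_eq_mul_div, div_lt_iff₀ hsp,
      Real.sinh_eq, Real.cosh_eq, Real.exp_neg]
    nlinarith [hiv.1, hiv.2, he.1, he.2]
  linarith

lemma key2 : y 2 * Real.log (y 2) / (y 2 - 1) < 2 / Real.tanh 2 := by
  have hcp : (0:ℝ) < Real.cosh 4 := Real.cosh_pos _
  have hy_def : y 2 = Real.sqrt (Real.cosh 4) := by
    unfold y; norm_num
  have hyl : (5.2257:ℝ) < y 2 := by
    rw [hy_def]
    exact (Real.lt_sqrt (by norm_num)).2 (by nlinarith [hc4.1])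
  have hlog : Real.log (y 2) = Real.log (Real.cosh 4) / 2 := by
    rw [hy_def, Real.log_sqrt hcp.le]
  have hL := hL4
  have hLp : 0 < Real.log (Real.cosh 4) := by
    apply Real.log_pos; nlinarith [hc4.1]
  have hLHS : y 2 * Real.log (y 2) / (y 2 - 1) < 2.06 := by
    rw [hlog, div_lt_iff₀ (by linarith)]
    nlinarith [mul_nonneg (by linarith : (0:ℝ) ≤ y 2 - 5.2257)
      (by linarith : (0:ℝ) ≤ 83/25 - Real.log (Real.cosh 4))]
  have he := he2
  have hp := Real.exp_pos (2:ℝ)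
  have hinv : Real.exp 2 * (Real.exp 2)⁻¹ = 1 := mul_inv_cancel₀ (ne_of_gt hp)
  have hiv : (0.1353352:ℝ) < (Real.exp 2)⁻¹ ∧ ((Real.exp 2)⁻¹:ℝ) < 0.1353353 := by
    have hq : 0 < (Real.exp 2)⁻¹ := by positivity
    constructor <;> nlinarith [he.1, he.2]
  have hsp : (0:ℝ) < Real.sinh 2 := Real.sinh_pos_iff.2 (by norm_num)
  have hRHS : (2.06:ℝ) < 2 / Real.tanh 2 := by
    rw [Real.tanh_eq_sinh_div_cosh, div_div_eq_mul_div, lt_div_iff₀ hsp,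
      Real.sinh_eq, Real.cosh_eq, Real.exp_neg]
    nlinarith [hiv.1, hiv.2, he.1, he.2]
  linarith

lemma hy_gt_one (x : ℝ) (hx : 0 < x) : 1 < y x := by
  unfold y
  have hc : (1:ℝ) < Real.cosh (2 * x) := Real.one_lt_cosh.2 (by positivity)
  exact (Real.lt_sqrt (by norm_num)).2 (by nlinarith)

lemma Iab_eq (x : ℝ) (hx : 0 < x) :
    I (Real.exp x) (Real.exp (-x)) = Real.exp (x / Real.tanh x - 1) := by
  unfold I
  have hs : 0 < Real.sinh x := Real.sinh_pos_iff.2 hx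
  have hc : (0:ℝ) < Real.cosh x := Real.cosh_pos _
  rw [Real.rpow_def_of_pos (Real.exp_pos x), Real.rpow_def_of_pos (Real.exp_pos (-x)),
    Real.log_exp, Real.log_exp, ← Real.exp_sub,
    Real.rpow_def_of_pos (Real.exp_pos _), Real.log_exp, one_div (Real.exp 1),
    ← Real.exp_neg, ← Real.exp_add]
  congr 1
  have hab : Real.exp x - Real.exp (-x) = 2 * Real.sinh x := by
    rw [Real.sinh_eq]; ring
  have hT : x * Real.exp x - (-x) * Real.exp (-x) = 2 * x * Real.cosh x := by
    rw [Real.cosh_eq]; ring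
  rw [hab, hT, Real.tanh_eq_sinh_div_cosh]
  field_simp
  ring

lemma IQG_eq (x : ℝ) (hx : 0 < x) :
    I (Q (Real.exp x) (Real.exp (-x))) (G (Real.exp x) (Real.exp (-x)))
      = Real.exp (y x * Real.log (y x) / (y x - 1) - 1) := by
  have hG : G (Real.exp x) (Real.exp (-x)) = 1 := by
    unfold G; rw [← Real.exp_add]; simp
  have hQ : Q (Real.exp x) (Real.exp (-x)) = y x := by
    unfold Q y
    congr 1
    rw [Real.cosh_eq, sq, sq, ← Real.exp_add, ← Real.exp_add]
    have h1 : x + x = 2 * x := by ring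
    have h2 : -x + -x = -(2 * x) := by ring
    rw [h1, h2]
  rw [hG, hQ]
  unfold I
  have hy := hy_gt_one x hx
  have hy0 : (0:ℝ) < y x := by linarith
  rw [Real.one_rpow, div_one, Real.rpow_def_of_pos hy0,
    Real.rpow_def_of_pos (Real.exp_pos _), Real.log_exp, one_div (Real.exp 1),
    ← Real.exp_neg, ← Real.exp_add]
  congr 1
  field_simp
  ring

theorem stmt_19 :
    (∃ x : ℝ, 0 < x ∧ y x * Real.log (y x) / (y x - 1) > x / Real.tanh x) ∧
    (∃ x : ℝ, 0 < x ∧ y x * Real.log (y x) / (y x - 1) < x / Real.tanh x) ∧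
    (∃ a b : ℝ, 0 < a ∧ 0 < b ∧ a ≠ b ∧ I a b > I (Q a b) (G a b)) ∧
    (∃ a b : ℝ, 0 < a ∧ 0 < b ∧ a ≠ b ∧ I a b < I (Q a b) (G a b)) := by
  refine ⟨⟨1.5, by norm_num, key15⟩, ⟨2, by norm_num, key2⟩, ?_, ?_⟩
  · refine ⟨Real.exp 2, Real.exp (-2), Real.exp_pos _, Real.exp_pos _, ?_, ?_⟩
    · intro h
      have := Real.exp_injective h
      norm_num at this
    · rw [Iab_eq 2 (by norm_num), IQG_eq 2 (by norm_num)]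
      exact Real.exp_lt_exp.2 (by linarith [key2])
  · refine ⟨Real.exp 1.5, Real.exp (-1.5), Real.exp_pos _, Real.exp_pos _, ?_, ?_⟩
    · intro h
      have := Real.exp_injective h
      norm_num at this
    · rw [Iab_eq 1.5 (by norm_num), IQG_eq 1.5 (by norm_num)]
      exact Real.exp_lt_exp.2 (by linarith [key15])
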